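/- arXiv:2102.09932 — 5 statements merged into one kernel-verified Lean document; each statement's English description precedes it below -/
import Mathlib

section
/- Let T > 0, let φ ∈ L¹(0,T) be real-valued, and let f : [0,T] → ℝ be absolutely continuous, i.e. there is g ∈ L¹(0,T) with f(t) = f(0) + ∫₀ᵗ g(s) ds for all t ∈ [0,T]. Then for almost every t ∈ (0,T) the function t ↦ ∫₀ᵗ φ(t−τ) f(τ) dτ is differentiable at t and its derivative satisfies (d/dt) ∫₀ᵗ φ(t−τ) f(τ) dτ − φ(t) f(0) = ∫₀ᵗ φ(t−τ) g(τ) dτ. -/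
/-!
Extend `φ` and `g` by zero outside `(0, T]` to integrable functions `Φ` and `G` on `ℝ`. On
`[0, T]` one has `f = f 0 + ∫_{-∞}^· G`, and Fubini turns `∫₀ᵘ φ (u - τ) f τ dτ` into the
primitive `∫₀ᵘ (f 0 • Φ + Φ ⋆ G)`. Lebesgue's differentiation theorem differentiates this
primitive almost everywhere, and on `(0, T)` its integrand is
`φ t f 0 + ∫₀ᵗ φ (t - τ) g τ dτ`.
-/

open MeasureTheory Set
open scoped Convolution

section VanishingOnNonpos

variable {E : Type*} [NormedAddCommGroup E] [NormedSpace ℝ E]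

theorem indicator_Ioc_of_nonpos {M : Type*} [Zero M] (T : ℝ) (b : ℝ → M) {x : ℝ}
    (hx : x ≤ 0) : (Ioc 0 T).indicator b x = 0 :=
  indicator_of_notMem (fun h => hx.not_gt h.1) b

theorem intervalIntegral_indicator_Ioc (c : ℝ → E) {T y : ℝ} (hy : y ∈ Icc 0 T) :
    ∫ s in 0..y, (Ioc 0 T).indicator c s = ∫ s in 0..y, c s := by
  refine intervalIntegral.integral_congr_ae (ae_of_all _ fun s hs => ?_)
  rw [uIoc_of_le hy.1] at hs
  exact indicator_of_mem (show s ∈ Ioc 0 T from ⟨hs.1, hs.2.trans hy.2⟩) c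

theorem setIntegral_Iic_eq_intervalIntegral {h : ℝ → E} (h0 : ∀ x ≤ 0, h x = 0) {u : ℝ}
    (hu : 0 ≤ u) : ∫ x in Iic u, h x = ∫ x in 0..u, h x := by
  rw [intervalIntegral.integral_of_le hu]
  refine setIntegral_eq_of_subset_of_forall_sdiff_eq_zero measurableSet_Iic Ioc_subset_Iic_self
    fun x hx => h0 x ?_
  by_contra! hx0
  exact hx.2 ⟨hx0, hx.1⟩

theorem convolution_eq_zero_of_nonpos {a b : ℝ → ℝ} (ha : ∀ x ≤ 0, a x = 0)
    (hb : ∀ x ≤ 0, b x = 0) {x : ℝ} (hx : x ≤ 0) : (a ⋆ b) x = 0 := by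
  refine integral_eq_zero_of_ae (ae_of_all _ fun t => ?_)
  rcases le_or_gt t 0 with ht | ht
  · simp [ha t ht]
  · simp [hb (x - t) (by linarith)]

/-- The integrand on the left vanishes off `Ioo 0 t`; the endpoint `τ = t`, where `b 0` may be
nonzero on the right, is a null set. -/
theorem integral_indicator_Ioc_sub_mul {a b : ℝ → ℝ} (ha : ∀ x ≤ 0, a x = 0) {T t : ℝ}
    (ht : t ∈ Icc 0 T) :
    ∫ τ, (Ioc 0 T).indicator b (t - τ) * a τ = ∫ τ in 0..t, b (t - τ) * a τ := by
  rw [intervalIntegral.integral_of_le ht.1, integral_Ioc_eq_integral_Ioo,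
    ← integral_indicator measurableSet_Ioo]
  congr 1 with τ
  by_cases hτ : τ ∈ Ioo 0 t
  · have hsub : t - τ ∈ Ioc 0 T := ⟨by linarith [hτ.2], by linarith [hτ.1, ht.2]⟩
    rw [indicator_of_mem hτ, indicator_of_mem hsub]
  · rw [indicator_of_notMem hτ]
    simp only [mem_Ioo, not_and, not_lt] at hτ
    rcases le_or_gt τ 0 with hτ0 | hτ0
    · rw [ha τ hτ0, mul_zero]
    · rw [indicator_Ioc_of_nonpos T b (by linarith [hτ hτ0]), zero_mul]

end VanishingOnNonpos

theorem setIntegral_Iic_comp_sub_right {E : Type*} [NormedAddCommGroup E] [NormedSpace ℝ E]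
    (g : ℝ → E) (u t : ℝ) : ∫ x in Iic u, g (x - t) = ∫ s in Iic (u - t), g s := by
  have := (measurePreserving_sub_right volume t).setIntegral_preimage_emb
    (measurableEmbedding_subRight t) g (Iic (u - t))
  simpa [preimage_sub_const_Iic] using this

theorem setIntegral_Iic_convolution {f g : ℝ → ℝ} (hf : Integrable f) (hg : Integrable g)
    (u : ℝ) : ∫ x in Iic u, (f ⋆ g) x = (f ⋆ fun y => ∫ s in Iic y, g s) u := by
  set F : ℝ → ℝ → ℝ := fun x t => (Iic u).indicator (fun x => f t * g (x - t)) x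
  have hF : Integrable (Function.uncurry F) (volume.prod volume) := by
    have := (hf.convolution_integrand (ContinuousLinearMap.lsmul ℝ ℝ) hg).indicator
      ((measurableSet_Iic (a := u)).preimage measurable_fst)
    refine this.congr (ae_of_all _ fun p => ?_)
    by_cases hp : p.1 ≤ u <;> simp [F, hp, Function.uncurry]
  calc ∫ x in Iic u, (f ⋆ g) x = ∫ x, ∫ t, F x t := by
        rw [← integral_indicator measurableSet_Iic]
        congr 1 with x
        by_cases hx : x ∈ Iic u <;> simp [F, hx, convolution_lsmul]
    _ = ∫ t, ∫ x, F x t := integral_integral_swap hF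
    _ = (f ⋆ fun y => ∫ s in Iic y, g s) u := by
        simp only [F, convolution_lsmul, smul_eq_mul]
        congr 1 with t
        rw [integral_indicator measurableSet_Iic, integral_const_mul,
          setIntegral_Iic_comp_sub_right]

theorem indicator_Ioc_convolution_apply {φ g : ℝ → ℝ} {T t : ℝ} (ht : t ∈ Icc 0 T) :
    ((Ioc 0 T).indicator φ ⋆ (Ioc 0 T).indicator g) t = ∫ τ in 0..t, φ (t - τ) * g τ := by
  rw [convolution_lsmul_swap]
  change ∫ τ, (Ioc 0 T).indicator φ (t - τ) * (Ioc 0 T).indicator g τ = _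
  rw [integral_indicator_Ioc_sub_mul (fun x hx => indicator_Ioc_of_nonpos T g hx) ht,
    ← intervalIntegral_indicator_Ioc (fun τ => φ (t - τ) * g τ) ht]
  simp only [indicator_mul_right]

theorem integral_comp_sub_mul_eq_integral_smul_add_convolution {T : ℝ} {φ f g : ℝ → ℝ}
    (hφ : IntegrableOn φ (Ioc 0 T)) (hg : IntegrableOn g (Ioc 0 T))
    (hf : ∀ t ∈ Icc (0:ℝ) T, f t = f 0 + ∫ s in (0:ℝ)..t, g s) {u : ℝ} (hu : u ∈ Icc 0 T) :
    ∫ τ in 0..u, φ (u - τ) * f τ =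
      ∫ t in 0..u,
        (f 0 • (Ioc 0 T).indicator φ + (Ioc 0 T).indicator φ ⋆ (Ioc 0 T).indicator g) t := by
  set Φ := (Ioc 0 T).indicator φ
  set G := (Ioc 0 T).indicator g
  set W := fun y => ∫ s in Iic y, G s
  have hΦ : Integrable Φ := hφ.integrable_indicator measurableSet_Ioc
  have hG : Integrable G := hg.integrable_indicator measurableSet_Ioc
  have hΦ0 : ∀ x ≤ 0, Φ x = 0 := fun x hx => indicator_Ioc_of_nonpos T φ hx
  have hG0 : ∀ x ≤ 0, G x = 0 := fun x hx => indicator_Ioc_of_nonpos T g hx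
  have hW0 : ∀ x ≤ 0, W x = 0 := fun x hx =>
    setIntegral_eq_zero_of_forall_eq_zero fun s hs => hG0 s (le_trans hs hx)
  have hW : ∀ τ ∈ Icc 0 T, W τ = f τ - f 0 := fun τ hτ => by
    rw [hf τ hτ, add_sub_cancel_left, ← intervalIntegral_indicator_Ioc g hτ,
      ← setIntegral_Iic_eq_intervalIntegral hG0 hτ.1]
  have hφu : IntervalIntegrable (fun τ => φ (u - τ)) volume 0 u := by
    have : IntervalIntegrable φ volume 0 u :=
      (intervalIntegrable_iff_integrableOn_Ioc_of_le hu.1).2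
        (hφ.mono_set (Ioc_subset_Ioc_right hu.2))
    simpa using (this.comp_sub_left u).symm
  have hWc : ContinuousOn W (uIcc 0 u) :=
    hG.integrableOn.continuousOn_Iic_primitive_Iic.mono fun τ hτ => by
      rw [uIcc_of_le hu.1] at hτ
      exact hτ.2
  calc ∫ τ in 0..u, φ (u - τ) * f τ
      = ∫ τ in 0..u, (φ (u - τ) * f 0 + φ (u - τ) * W τ) := by
        refine intervalIntegral.integral_congr fun τ hτ => ?_
        rw [uIcc_of_le hu.1] at hτ
        simp only [hW τ ⟨hτ.1, hτ.2.trans hu.2⟩]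
        ring
    _ = (∫ t in 0..u, Φ t) * f 0 + ∫ τ, Φ (u - τ) * W τ := by
        rw [intervalIntegral.integral_add (hφu.mul_const _) (hφu.mul_continuousOn hWc),
          intervalIntegral.integral_mul_const, intervalIntegral.integral_comp_sub_left, sub_self,
          sub_zero, integral_indicator_Ioc_sub_mul hW0 hu, intervalIntegral_indicator_Ioc φ hu]
    _ = (∫ t in 0..u, Φ t) * f 0 + ∫ x in Iic u, (Φ ⋆ G) x := by
        rw [setIntegral_Iic_convolution hΦ hG, convolution_lsmul_swap]
        rfl
    _ = ∫ t in 0..u, (f 0 • Φ + Φ ⋆ G) t := by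
        rw [setIntegral_Iic_eq_intervalIntegral
          (fun x hx => convolution_eq_zero_of_nonpos hΦ0 hG0 hx) hu.1, mul_comm]
        simp only [Pi.add_apply, Pi.smul_apply, smul_eq_mul]
        rw [intervalIntegral.integral_add (hΦ.intervalIntegrable.const_mul _)
          (hΦ.integrable_convolution _ hG).intervalIntegrable, intervalIntegral.integral_const_mul]

theorem scarpi_derivative_representation_general
    (T : ℝ) (φ f g : ℝ → ℝ)
    (hφ : IntegrableOn φ (Ioc 0 T))
    (hg : IntegrableOn g (Ioc 0 T))
    (hf : ∀ t ∈ Icc (0:ℝ) T, f t = f 0 + ∫ s in (0:ℝ)..t, g s) :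
    ∀ᵐ t ∂(volume.restrict (Ioo (0:ℝ) T)),
      HasDerivAt (fun u => ∫ τ in (0:ℝ)..u, φ (u - τ) * f τ)
        (φ t * f 0 + ∫ τ in (0:ℝ)..t, φ (t - τ) * g τ) t := by
  have hΦ : Integrable ((Ioc 0 T).indicator φ) := hφ.integrable_indicator measurableSet_Ioc
  have hG : Integrable ((Ioc 0 T).indicator g) := hg.integrable_indicator measurableSet_Ioc
  have hh : LocallyIntegrable
      (f 0 • (Ioc 0 T).indicator φ + (Ioc 0 T).indicator φ ⋆ (Ioc 0 T).indicator g) :=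
    ((hΦ.smul (f 0)).add (hΦ.integrable_convolution _ hG)).locallyIntegrable
  filter_upwards [ae_restrict_of_ae (LocallyIntegrable.ae_hasDerivAt_integral hh),
    ae_restrict_mem measurableSet_Ioo] with t hderiv ht
  have hval : (f 0 • (Ioc 0 T).indicator φ + (Ioc 0 T).indicator φ ⋆ (Ioc 0 T).indicator g) t =
      φ t * f 0 + ∫ τ in 0..t, φ (t - τ) * g τ := by
    rw [Pi.add_apply, Pi.smul_apply, smul_eq_mul, indicator_of_mem (Ioo_subset_Ioc_self ht),
      indicator_Ioc_convolution_apply (Ioo_subset_Icc_self ht), mul_comm]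
  rw [← hval]
  refine (hderiv 0).congr_of_eventuallyEq ?_
  filter_upwards [isOpen_Ioo.mem_nhds ht] with u hu
  exact integral_comp_sub_mul_eq_integral_smul_add_convolution hφ hg hf (Ioo_subset_Icc_self hu)

theorem scarpi_derivative_representation
    (T : ℝ) (hT : 0 < T) (φ f g : ℝ → ℝ)
    (hφ : IntegrableOn φ (Ioc 0 T))
    (hg : IntegrableOn g (Ioc 0 T))
    (hf : ∀ t ∈ Icc (0:ℝ) T, f t = f 0 + ∫ s in (0:ℝ)..t, g s) :
    ∀ᵐ t ∂(volume.restrict (Ioo (0:ℝ) T)),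
      HasDerivAt (fun u => ∫ τ in (0:ℝ)..u, φ (u - τ) * f τ)
        (φ t * f 0 + ∫ τ in (0:ℝ)..t, φ (t - τ) * g τ) t :=
  scarpi_derivative_representation_general T φ f g hφ hg hf
end

section
/- Let φ, ψ : (0,∞) → ℝ be measurable and let σ > 0 be such that t ↦ e^{−σt} |φ(t)| and t ↦ e^{−σt} |ψ(t)| are integrable on (0,∞). If (∫₀^∞ e^{−st} φ(t) dt) · (∫₀^∞ e^{−st} ψ(t) dt) = 1/s for every real s > σ, then ∫₀ᵗ φ(t−τ) ψ(τ) dτ = 1 for almost every t > 0, i.e. φ and ψ form a Sonine pair. -/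
/-!
Under the Laplace transform the convolution `c(t) = ∫₀ᵗ φ(t-τ) ψ(τ) dτ` becomes the product of the
transforms, i.e. `1/s`, which is also the transform of the constant `1`; so the difference `c - 1`
has vanishing Laplace transform on `(σ, ∞)`. Lerch's uniqueness theorem then gives `c = 1` a.e.
It is proved with the substitution `x = e^{-t}`, which turns the values of the transform at the
points `s₀ + n` into the moments `∫₀¹ xⁿ k(x) dx` of an integrable function `k`; by the
Weierstrass approximation theorem `k` integrates every continuous function to zero, hence vanishes.
-/

open MeasureTheory Set Real Polynomial

section Moments

variable {k : ℝ → ℝ} {a b : ℝ}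

theorem integrableOn_Ioo_continuous_mul {g : ℝ → ℝ} (hg : Continuous g)
    (hk : IntegrableOn k (Ioo a b)) : IntegrableOn (fun x => g x * k x) (Ioo a b) :=
  ((hk.congr_set_ae Ioo_ae_eq_Icc.symm).continuousOn_mul hg.continuousOn
    isCompact_Icc).mono_set Ioo_subset_Icc_self

variable (hk : IntegrableOn k (Ioo a b)) (hmom : ∀ n : ℕ, ∫ x in Ioo a b, x ^ n * k x = 0)
include hk hmom

theorem integral_eval_mul_eq_zero_of_moments (p : ℝ[X]) :
    ∫ x in Ioo a b, p.eval x * k x = 0 := by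
  simp_rw [eval_eq_sum_range, Finset.sum_mul, mul_assoc]
  rw [integral_finsetSum _ fun i _ =>
    (integrableOn_Ioo_continuous_mul (continuous_pow i) hk).const_mul _]
  exact Finset.sum_eq_zero fun i _ => by rw [integral_const_mul, hmom, mul_zero]

theorem integral_continuous_mul_eq_zero_of_moments {g : ℝ → ℝ} (hg : Continuous g) :
    ∫ x in Ioo a b, g x * k x = 0 := by
  set C := ∫ x in Ioo a b, |k x|
  have hC : 0 ≤ C := setIntegral_nonneg measurableSet_Ioo fun _ _ => abs_nonneg _
  refine eq_of_forall_dist_le fun ε hε => ?_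
  obtain ⟨p, hp⟩ := exists_polynomial_near_of_continuousOn a b g hg.continuousOn
    (ε / (C + 1)) (by positivity)
  have hgp : ∫ x in Ioo a b, g x * k x = ∫ x in Ioo a b, (g x - p.eval x) * k x := by
    simp_rw [sub_mul]
    rw [integral_sub (integrableOn_Ioo_continuous_mul hg hk)
      (integrableOn_Ioo_continuous_mul p.continuous hk),
      integral_eval_mul_eq_zero_of_moments hk hmom, sub_zero]
  calc dist (∫ x in Ioo a b, g x * k x) 0
      = ‖∫ x in Ioo a b, (g x - p.eval x) * k x‖ := by rw [dist_zero_right, hgp]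
    _ ≤ ∫ x in Ioo a b, ε / (C + 1) * |k x| := by
        refine norm_integral_le_of_norm_le (hk.abs.const_mul _) ?_
        filter_upwards [ae_restrict_mem measurableSet_Ioo] with x hx
        rw [norm_mul, Real.norm_eq_abs, Real.norm_eq_abs, abs_sub_comm]
        exact mul_le_mul_of_nonneg_right (hp x (Ioo_subset_Icc_self hx)).le (abs_nonneg _)
    _ = ε * (C / (C + 1)) := by rw [integral_const_mul]; ring
    _ ≤ ε := mul_le_of_le_one_right hε.le ((div_le_one (by positivity)).2 (by linarith))

theorem ae_eq_zero_of_moments : ∀ᵐ x ∂volume.restrict (Ioo a b), k x = 0 :=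
  ae_eq_zero_of_integral_contDiff_smul_eq_zero hk.locallyIntegrable fun _ hg _ =>
    integral_continuous_mul_eq_zero_of_moments hk hmom hg.continuous

end Moments

section ExpNegSubstitution

variable {E : Type*} [NormedAddCommGroup E] [NormedSpace ℝ E]

theorem image_exp_neg_Ioi_zero : (fun t => exp (-t)) '' Ioi 0 = Ioo 0 1 := by
  rw [← image_image exp Neg.neg, image_neg_Ioi, neg_zero, image_exp_Iio, exp_zero]

theorem hasDerivWithinAt_exp_neg (s : Set ℝ) (t : ℝ) :
    HasDerivWithinAt (fun t => exp (-t)) (-exp (-t)) s t := by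
  simpa using ((hasDerivAt_neg t).exp).hasDerivWithinAt

theorem integral_comp_exp_neg_Ioi (g : ℝ → E) :
    ∫ t in Ioi 0, exp (-t) • g (exp (-t)) = ∫ x in Ioo 0 1, g x := by
  rw [← image_exp_neg_Ioi_zero, integral_image_eq_integral_abs_deriv_smul measurableSet_Ioi
    (fun t _ => hasDerivWithinAt_exp_neg _ t) (fun _ _ _ _ h => neg_injective (exp_injective h))]
  simp_rw [abs_neg, abs_of_pos (exp_pos _)]

theorem integrableOn_comp_exp_neg_Ioi (g : ℝ → E) :
    IntegrableOn (fun t => exp (-t) • g (exp (-t))) (Ioi 0) ↔ IntegrableOn g (Ioo 0 1) := by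
  rw [← image_exp_neg_Ioi_zero, integrableOn_image_iff_integrableOn_abs_deriv_smul
    measurableSet_Ioi (fun t _ => hasDerivWithinAt_exp_neg _ t)
    (fun _ _ _ _ h => neg_injective (exp_injective h))]
  simp_rw [abs_neg, abs_of_pos (exp_pos _)]

end ExpNegSubstitution

noncomputable def laplaceTransform (f : ℝ → ℝ) (s : ℝ) : ℝ :=
  ∫ t in Ioi 0, exp (-s * t) * f t

theorem laplaceTransform_one {s : ℝ} (hs : 0 < s) :
    laplaceTransform (fun _ => 1) s = 1 / s := by
  simp_rw [laplaceTransform, mul_one]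
  rw [integral_exp_mul_Ioi (neg_neg_of_pos hs)]
  simp [neg_div, one_div]

theorem integrableOn_exp_mul_one {s : ℝ} (hs : 0 < s) :
    IntegrableOn (fun t => exp (-s * t) * 1) (Ioi 0) := by
  simpa using integrableOn_exp_mul_Ioi (neg_neg_of_pos hs) 0

theorem laplaceTransform_sub {s : ℝ} {f g : ℝ → ℝ}
    (hf : IntegrableOn (fun t => exp (-s * t) * f t) (Ioi 0))
    (hg : IntegrableOn (fun t => exp (-s * t) * g t) (Ioi 0)) :
    laplaceTransform (fun t => f t - g t) s = laplaceTransform f s - laplaceTransform g s := by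
  simp_rw [laplaceTransform, mul_sub]
  exact integral_sub hf hg

theorem integrableOn_exp_mul_of_le {f : ℝ → ℝ} {σ s : ℝ}
    (hfm : AEStronglyMeasurable f (volume.restrict (Ioi 0))) (hσs : σ ≤ s)
    (hf : IntegrableOn (fun t => exp (-σ * t) * |f t|) (Ioi 0)) :
    IntegrableOn (fun t => exp (-s * t) * f t) (Ioi 0) := by
  refine hf.mono'
    ((continuous_exp.comp (continuous_const_mul (-s))).aestronglyMeasurable.mul hfm) ?_
  filter_upwards [ae_restrict_mem measurableSet_Ioi] with t (ht : 0 < t)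
  rw [norm_mul, Real.norm_of_nonneg (exp_pos _).le, Real.norm_eq_abs]
  gcongr

theorem ae_eq_zero_of_laplaceTransform_eq_zero {g : ℝ → ℝ} {s₀ : ℝ}
    (hg : IntegrableOn (fun t => exp (-s₀ * t) * g t) (Ioi 0))
    (hzero : ∀ n : ℕ, laplaceTransform g (s₀ + n) = 0) :
    ∀ᵐ t ∂volume.restrict (Ioi 0), g t = 0 := by
  set k : ℝ → ℝ := fun x => x ^ (s₀ - 1) * g (-log x)
  have hk (n : ℕ) (t : ℝ) :
      exp (-t) • (exp (-t) ^ n * k (exp (-t))) = exp (-(s₀ + n) * t) * g t := by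
    simp only [k, smul_eq_mul, log_exp, neg_neg, ← exp_mul, ← exp_nat_mul, ← mul_assoc,
      ← exp_add]
    ring_nf
  have hk₀ (t : ℝ) : exp (-t) • k (exp (-t)) = exp (-s₀ * t) * g t := by simpa using hk 0 t
  have hk_int : IntegrableOn k (Ioo 0 1) :=
    (integrableOn_comp_exp_neg_Ioi k).1 (hg.congr_fun (fun t _ => (hk₀ t).symm) measurableSet_Ioi)
  have hk_zero : ∀ᵐ x ∂volume.restrict (Ioo 0 1), k x = 0 :=
    ae_eq_zero_of_moments hk_int fun n => by
      rw [← integral_comp_exp_neg_Ioi]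
      simp only [hk]
      exact hzero n
  have habs : ∫ t in Ioi 0, |exp (-s₀ * t) * g t| = 0 :=
    calc ∫ t in Ioi 0, |exp (-s₀ * t) * g t|
        = ∫ t in Ioi 0, exp (-t) • |k (exp (-t))| :=
          setIntegral_congr_fun measurableSet_Ioi fun t _ => by
            rw [← hk₀, smul_eq_mul, abs_mul, abs_of_pos (exp_pos _), smul_eq_mul]
      _ = ∫ x in Ioo 0 1, |k x| := integral_comp_exp_neg_Ioi fun x => |k x|
      _ = 0 := integral_eq_zero_of_ae (by filter_upwards [hk_zero] with x hx; simp [hx])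
  filter_upwards [(setIntegral_eq_zero_iff_of_nonneg_ae (ae_of_all _ fun _ => abs_nonneg _)
    hg.abs).1 habs] with t ht
  simpa [exp_ne_zero] using ht

section Convolution

open scoped Convolution

/-- Extending `t ↦ e^{-st} f t` by zero off `(0, ∞)` turns the convolution over `(0, t)` into
the convolution over `ℝ`, and the Laplace transform into an integral over `ℝ`. -/
noncomputable def expDamped (s : ℝ) (f : ℝ → ℝ) : ℝ → ℝ :=
  (Ioi 0).indicator fun t => exp (-s * t) * f t

theorem integrable_expDamped_iff {s : ℝ} {f : ℝ → ℝ} :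
    Integrable (expDamped s f) ↔ IntegrableOn (fun t => exp (-s * t) * f t) (Ioi 0) :=
  integrable_indicator_iff measurableSet_Ioi

theorem integral_expDamped (s : ℝ) (f : ℝ → ℝ) :
    ∫ t, expDamped s f t = laplaceTransform f s :=
  integral_indicator measurableSet_Ioi

theorem expDamped_mul_expDamped_sub (s : ℝ) (f g : ℝ → ℝ) (t τ : ℝ) :
    expDamped s g τ * expDamped s f (t - τ) =
      (Ioo 0 t).indicator (fun τ => exp (-s * t) * (f (t - τ) * g τ)) τ := by
  simp only [expDamped, indicator, mem_Ioi, mem_Ioo, sub_pos]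
  split_ifs
  · rw [show -s * t = -s * τ + -s * (t - τ) by ring, exp_add]
    ring
  all_goals simp_all

theorem expDamped_convolution (s : ℝ) (f g : ℝ → ℝ) :
    expDamped s g ⋆ expDamped s f = expDamped s fun t => ∫ τ in 0..t, f (t - τ) * g τ := by
  ext t
  simp only [convolution_def, ContinuousLinearMap.lsmul_apply, smul_eq_mul,
    expDamped_mul_expDamped_sub, integral_indicator measurableSet_Ioo, integral_const_mul]
  rcases lt_or_ge 0 t with ht | ht
  · rw [expDamped, indicator_of_mem (mem_Ioi.2 ht), intervalIntegral.integral_of_le ht.le,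
      integral_Ioc_eq_integral_Ioo]
  · rw [expDamped, indicator_of_notMem (notMem_Ioi.2 ht), Ioo_eq_empty (not_lt.2 ht),
      Measure.restrict_empty, integral_zero_measure, mul_zero]

variable {s : ℝ} {f g : ℝ → ℝ} (hf : IntegrableOn (fun t => exp (-s * t) * f t) (Ioi 0))
  (hg : IntegrableOn (fun t => exp (-s * t) * g t) (Ioi 0))
include hf hg

theorem integrableOn_exp_mul_convolution :
    IntegrableOn (fun t => exp (-s * t) * ∫ τ in 0..t, f (t - τ) * g τ) (Ioi 0) := by
  rw [← integrable_expDamped_iff, ← expDamped_convolution]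
  exact (integrable_expDamped_iff.2 hg).integrable_convolution _ (integrable_expDamped_iff.2 hf)

theorem laplaceTransform_convolution :
    laplaceTransform (fun t => ∫ τ in 0..t, f (t - τ) * g τ) s =
      laplaceTransform f s * laplaceTransform g s := by
  rw [← integral_expDamped, ← expDamped_convolution,
    integral_convolution _ (integrable_expDamped_iff.2 hg) (integrable_expDamped_iff.2 hf),
    integral_expDamped, integral_expDamped, ContinuousLinearMap.lsmul_apply, smul_eq_mul,
    mul_comm]

end Convolution

theorem sonine_pair_from_laplace_general
    (φ ψ : ℝ → ℝ) (σ : ℝ)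
    (hφm : Measurable φ) (hψm : Measurable ψ)
    (hφ : IntegrableOn (fun t => Real.exp (-σ * t) * |φ t|) (Ioi 0))
    (hψ : IntegrableOn (fun t => Real.exp (-σ * t) * |ψ t|) (Ioi 0))
    (h : ∀ s : ℝ, σ < s →
      (∫ t in Ioi (0:ℝ), Real.exp (-s * t) * φ t)
        * (∫ t in Ioi (0:ℝ), Real.exp (-s * t) * ψ t) = 1 / s) :
    ∀ᵐ t ∂(volume.restrict (Ioi (0:ℝ))),
      (∫ τ in (0:ℝ)..t, φ (t - τ) * ψ τ) = 1 := by
  set c : ℝ → ℝ := fun t => ∫ τ in 0..t, φ (t - τ) * ψ τ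
  have hlaplace {s : ℝ} (hσs : σ < s) (hs : 0 < s) :
      IntegrableOn (fun t => exp (-s * t) * (c t - 1)) (Ioi 0) ∧
        laplaceTransform (fun t => c t - 1) s = 0 := by
    have hφs := integrableOn_exp_mul_of_le hφm.aestronglyMeasurable hσs.le hφ
    have hψs := integrableOn_exp_mul_of_le hψm.aestronglyMeasurable hσs.le hψ
    have hc := integrableOn_exp_mul_convolution hφs hψs
    have hone := integrableOn_exp_mul_one hs
    refine ⟨(hc.sub hone).congr_fun (fun t _ => (mul_sub _ _ _).symm) measurableSet_Ioi, ?_⟩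
    rw [laplaceTransform_sub hc hone, laplaceTransform_convolution hφs hψs,
      laplaceTransform_one hs]
    exact sub_eq_zero.2 (h s hσs)
  obtain ⟨s₀, hσs₀, hs₀⟩ : ∃ s₀, σ < s₀ ∧ 0 < s₀ :=
    ⟨max σ 0 + 1, by linarith [le_max_left σ 0], by positivity⟩
  have hs₀n (n : ℕ) : σ < s₀ + n ∧ 0 < s₀ + n := by
    constructor <;> linarith [n.cast_nonneg (α := ℝ)]
  filter_upwards [ae_eq_zero_of_laplaceTransform_eq_zero (hlaplace hσs₀ hs₀).1
    fun n => (hlaplace (hs₀n n).1 (hs₀n n).2).2] with t ht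
  exact sub_eq_zero.1 ht

theorem sonine_pair_from_laplace
    (φ ψ : ℝ → ℝ) (σ : ℝ) (hσ : 0 < σ)
    (hφm : Measurable φ) (hψm : Measurable ψ)
    (hφ : IntegrableOn (fun t => Real.exp (-σ * t) * |φ t|) (Ioi 0))
    (hψ : IntegrableOn (fun t => Real.exp (-σ * t) * |ψ t|) (Ioi 0))
    (h : ∀ s : ℝ, σ < s →
      (∫ t in Ioi (0:ℝ), Real.exp (-s * t) * φ t)
        * (∫ t in Ioi (0:ℝ), Real.exp (-s * t) * ψ t) = 1 / s) :
    ∀ᵐ t ∂(volume.restrict (Ioi (0:ℝ))),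
      (∫ τ in (0:ℝ)..t, φ (t - τ) * ψ τ) = 1 :=
  sonine_pair_from_laplace_general φ ψ σ hφm hψm hφ hψ h
end

section
/- Let 0 < α₁ < α₂ < 1 and c > 0, and set A(s) = (α₂ c + α₁ s)/( s (c + s) ). For every real r > 0 with r ≠ c, define w(r) = ((α₂ − 1)c − (α₁ − 1)r)/(c − r). Then, with the principal complex power, ((−r : ℂ))^{((−r)·A(−r) − 1)} = r^{w(r)} ( cos(π w(r)) + i · sin(π w(r)) ); in particular the imaginary part of ((−r : ℂ))^{((−r)·A(−r) − 1)} equals r^{w(r)} sin(π w(r)). -/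
open Complex Real

/-!
At `s = -r` the exponent `s A(s) - 1` is the real number `w(r)`, and since `Log (-r) = ln r + iπ`,
the principal power is `(-r)^w = r^w e^{iπw}`.
-/

/-- `A(s)`, the Laplace transform of the transition `α(t) = α₂ + (α₁ - α₂) e^{-ct}`. -/
noncomputable def exponentialTransitionSymbol (α₁ α₂ c s : ℝ) : ℝ :=
  (α₂ * c + α₁ * s) / (s * (c + s))

theorem neg_mul_exponentialTransitionSymbol_neg_sub_one {α₁ α₂ c r : ℝ} (hr : r ≠ 0)
    (hrc : r ≠ c) :
    -r * exponentialTransitionSymbol α₁ α₂ c (-r) - 1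
      = ((α₂ - 1) * c - (α₁ - 1) * r) / (c - r) := by
  have hcr : c - r ≠ 0 := sub_ne_zero.mpr hrc.symm
  rw [exponentialTransitionSymbol, ← sub_eq_add_neg]
  field_simp
  ring

theorem Complex.neg_ofReal_cpow_ofReal {r : ℝ} (hr : 0 ≤ r) (w : ℝ) :
    (-r : ℂ) ^ (w : ℂ) = (r : ℂ) ^ (w : ℂ) * (Real.cos (π * w) + I * Real.sin (π * w)) := by
  have h := ofReal_cpow_of_nonpos (neg_nonpos.mpr hr) w
  push_cast at h
  rw [h, neg_neg, show (π : ℂ) * I * w = (π * w : ℝ) * I by push_cast; ring, exp_ofReal_mul_I,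
    mul_comm I]

theorem Complex.im_ofReal_mul_cos_add_I_mul_sin (x θ : ℝ) :
    ((x : ℂ) * (Real.cos θ + I * Real.sin θ)).im = x * Real.sin θ := by
  simp [sin_ofReal_re]

theorem titchmarsh_inversion_exponential_transition_general
    (α₁ α₂ c r A w : ℝ)
    (hr : 0 < r) (hrc : r ≠ c)
    (hA : A = (α₂ * c + α₁ * (-r)) / ((-r) * (c + (-r))))
    (hw : w = ((α₂ - 1) * c - (α₁ - 1) * r) / (c - r)) :
    ((-r : ℂ)) ^ ((-r : ℂ) * (A : ℂ) - 1)
      = (r : ℂ) ^ (w : ℂ)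
        * (Real.cos (Real.pi * w) + Complex.I * Real.sin (Real.pi * w)) ∧
    (((-r : ℂ)) ^ ((-r : ℂ) * (A : ℂ) - 1)).im = r ^ w * Real.sin (Real.pi * w) := by
  have hA' : A = exponentialTransitionSymbol α₁ α₂ c (-r) := hA
  have hexp : (-r : ℂ) * (A : ℂ) - 1 = (w : ℂ) := by
    rw [hw, ← neg_mul_exponentialTransitionSymbol_neg_sub_one hr.ne' hrc, ← hA']
    push_cast
    ring
  have hpow := neg_ofReal_cpow_ofReal hr.le w
  refine ⟨hexp ▸ hpow, ?_⟩
  rw [hexp, hpow, ← ofReal_cpow hr.le, im_ofReal_mul_cos_add_I_mul_sin]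

theorem titchmarsh_inversion_exponential_transition
    (α₁ α₂ c r A w : ℝ)
    (h1 : 0 < α₁) (h12 : α₁ < α₂) (h2 : α₂ < 1) (hc : 0 < c)
    (hr : 0 < r) (hrc : r ≠ c)
    (hA : A = (α₂ * c + α₁ * (-r)) / ((-r) * (c + (-r))))
    (hw : w = ((α₂ - 1) * c - (α₁ - 1) * r) / (c - r)) :
    ((-r : ℂ)) ^ ((-r : ℂ) * (A : ℂ) - 1)
      = (r : ℂ) ^ (w : ℂ)
        * (Real.cos (Real.pi * w) + Complex.I * Real.sin (Real.pi * w)) ∧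
    (((-r : ℂ)) ^ ((-r : ℂ) * (A : ℂ) - 1)).im = r ^ w * Real.sin (Real.pi * w) :=
  titchmarsh_inversion_exponential_transition_general α₁ α₂ c r A w hr hrc hA hw
end

section
/- Let 0 < α₁ < α₂ < 1 and c > 0, and for r ∈ (0,c) define w(r) = ((α₂ − 1)c − (α₁ − 1)r)/(c − r). Then there exists r ∈ (0,c) such that −(1/π) · r^{w(r)} · sin(π w(r)) < 0. In particular, the spectral distribution K_α^Φ(r) = −(1/π) r^{w(r)} sin(π w(r)) of the kernel Φ_α(s) = s^{sA(s)−1} associated with the exponential transition α(t) = α₂ + (α₁ − α₂)e^{−ct} is not nonnegative on (0,∞). -/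
/-!
On `(0, c)` the exponent `w(r)` increases from `α₂ - 1 < 0` to `+∞`, so it takes the value `1/2`
at some `r`; there `sin (π w(r)) = 1` while `r ^ w(r) > 0`, so the spectral distribution is negative.
-/

open Real

noncomputable def spectralExponent (α₁ α₂ c r : ℝ) : ℝ :=
  ((α₂ - 1) * c - (α₁ - 1) * r) / (c - r)

theorem exists_spectralExponent_eq {α₁ α₂ c v : ℝ} (h12 : α₁ < α₂) (hc : 0 < c)
    (hv : α₂ - 1 < v) : ∃ r, 0 < r ∧ r < c ∧ spectralExponent α₁ α₂ c r = v := by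
  have hd₂ : 0 < v + 1 - α₂ := by linarith
  have hd₁ : 0 < v + 1 - α₁ := by linarith
  -- the unique solution of `(α₂ - 1) c - (α₁ - 1) r = v (c - r)`
  set r := c * (v + 1 - α₂) / (v + 1 - α₁)
  have hrc : r < c := by
    rw [div_lt_iff₀ hd₁]
    exact mul_lt_mul_of_pos_left (by linarith) hc
  refine ⟨r, div_pos (mul_pos hc hd₂) hd₁, hrc, ?_⟩
  have hr : r * (v + 1 - α₁) = c * (v + 1 - α₂) := div_mul_cancel₀ _ hd₁.ne'
  rw [spectralExponent, div_eq_iff (sub_ne_zero.mpr hrc.ne')]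
  linear_combination hr

theorem neg_inv_pi_mul_rpow_mul_sin_neg {r w : ℝ} (hr : 0 < r) (hw₀ : 0 < w) (hw₁ : w < 1) :
    -(1 / π) * r ^ w * sin (π * w) < 0 := by
  have hsin : 0 < sin (π * w) := sin_pos_of_pos_of_lt_pi (by positivity) (by nlinarith [pi_pos])
  have hpow : 0 < r ^ w := rpow_pos_of_pos hr w
  have hcoef : -(1 / π) < 0 := by simp [pi_pos]
  exact mul_neg_of_neg_of_pos (mul_neg_of_neg_of_pos hcoef hpow) hsin

theorem spectral_distribution_not_nonnegative_general
    (α₁ α₂ c : ℝ)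
    (h12 : α₁ < α₂) (h2 : α₂ < 1) (hc : 0 < c) :
    ∃ r : ℝ, 0 < r ∧ r < c ∧
      -(1 / Real.pi)
        * r ^ (((α₂ - 1) * c - (α₁ - 1) * r) / (c - r))
        * Real.sin (Real.pi * (((α₂ - 1) * c - (α₁ - 1) * r) / (c - r))) < 0 := by
  obtain ⟨r, hr₀, hrc, hw⟩ := exists_spectralExponent_eq (v := 1 / 2) h12 hc (by linarith)
  refine ⟨r, hr₀, hrc, ?_⟩
  rw [← spectralExponent, hw]
  exact neg_inv_pi_mul_rpow_mul_sin_neg hr₀ (by norm_num) (by norm_num)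

theorem spectral_distribution_not_nonnegative
    (α₁ α₂ c : ℝ)
    (h1 : 0 < α₁) (h12 : α₁ < α₂) (h2 : α₂ < 1) (hc : 0 < c) :
    ∃ r : ℝ, 0 < r ∧ r < c ∧
      -(1 / Real.pi)
        * r ^ (((α₂ - 1) * c - (α₁ - 1) * r) / (c - r))
        * Real.sin (Real.pi * (((α₂ - 1) * c - (α₁ - 1) * r) / (c - r))) < 0 :=
  spectral_distribution_not_nonnegative_general α₁ α₂ c h12 h2 hc
end

section
/- Let α : (0,∞) → ℝ be measurable with values in (0,1), and suppose α(t) → ᾱ as t → 0⁺ for some ᾱ ∈ (0,1). Let A(s) = ∫₀^∞ e^{−st} α(t) dt for real s > 0. Then, with real powers, s^{s·A(s) − 1} → 0 and s^{−s·A(s)} → 0 as s → +∞. -/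
open MeasureTheory Set Filter

lemma int_exp_Ioi {s : ℝ} (a : ℝ) (hs : 0 < s) :
    ∫ x in Ioi a, Real.exp (-s * x) = Real.exp (-s * a) / s := by
  have h := MeasureTheory.integral_comp_mul_left_Ioi (fun y => Real.exp (-y)) a hs
  simp only [smul_eq_mul, integral_exp_neg_Ioi] at h
  simpa [neg_mul, div_eq_inv_mul] using h

lemma key_bounds
    (α : ℝ → ℝ) (ᾱ : ℝ)
    (hαm : Measurable α)
    (hrange : ∀ t ∈ Ioi (0:ℝ), α t ∈ Ioo (0:ℝ) 1)
    (hᾱ : ᾱ ∈ Ioo (0:ℝ) 1)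
    (hlim : Tendsto α (nhdsWithin 0 (Ioi 0)) (nhds ᾱ)) :
    ∃ c₁ c₂ : ℝ, 0 < c₁ ∧ c₂ < 1 ∧
      ∀ᶠ s in atTop, c₁ ≤ s * (∫ t in Ioi (0:ℝ), Real.exp (-s * t) * α t) ∧
        s * (∫ t in Ioi (0:ℝ), Real.exp (-s * t) * α t) ≤ c₂ := by
  obtain ⟨hᾱ0, hᾱ1⟩ := hᾱ
  set ε : ℝ := min ᾱ (1 - ᾱ) / 4 with hε_def
  have hε : 0 < ε := by
    have : 0 < min ᾱ (1 - ᾱ) := lt_min hᾱ0 (by linarith)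
    positivity
  have hεᾱ : ε ≤ ᾱ / 4 := by
    have := min_le_left ᾱ (1 - ᾱ); rw [hε_def]; linarith
  have hε1 : ε ≤ (1 - ᾱ) / 4 := by
    have := min_le_right ᾱ (1 - ᾱ); rw [hε_def]; linarith
  -- get δ from the limit
  rw [Metric.tendsto_nhdsWithin_nhds] at hlim
  obtain ⟨δ', hδ'pos, hδ'⟩ := hlim ε hε
  set δ : ℝ := δ' / 2 with hδ_def
  have hδpos : 0 < δ := by positivity
  have hαclose : ∀ t ∈ Ioc (0:ℝ) δ, |α t - ᾱ| < ε := by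
    intro t ht
    have := hδ' (mem_Ioi.mpr ht.1) (by
      rw [Real.dist_eq, sub_zero, abs_of_pos ht.1]; linarith [ht.2])
    rwa [Real.dist_eq] at this
  refine ⟨(ᾱ - ε) / 2, ᾱ + 2 * ε, by linarith, by linarith, ?_⟩
  have hexp : Tendsto (fun s : ℝ => Real.exp (-s * δ)) atTop (nhds 0) := by
    have h1 : Tendsto (fun s : ℝ => s * δ) atTop atTop :=
      tendsto_id.atTop_mul_const hδpos
    have h2 := Real.tendsto_exp_neg_atTop_nhds_zero.comp h1
    simp only [Function.comp_def] at h2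
    simpa [neg_mul] using h2
  filter_upwards [eventually_ge_atTop (1:ℝ), hexp.eventually (gt_mem_nhds hε)]
    with s hs1 hse
  have hs : (0:ℝ) < s := lt_of_lt_of_le one_pos hs1
  set e : ℝ := Real.exp (-s * δ) with he_def
  have he0 : 0 < e := Real.exp_pos _
  have heε : e < ε := hse
  -- integrability
  have hexpint : IntegrableOn (fun t => Real.exp (-s * t)) (Ioi (0:ℝ)) :=
    exp_neg_integrableOn_Ioi 0 hs
  have hmeas : AEStronglyMeasurable (fun t => Real.exp (-s * t) * α t)
      (volume.restrict (Ioi (0:ℝ))) := by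
    exact ((Real.measurable_exp.comp (measurable_id.const_mul (-s))).mul
      hαm).aestronglyMeasurable.restrict
  have hbound : ∀ᵐ t ∂(volume.restrict (Ioi (0:ℝ))),
      ‖Real.exp (-s * t) * α t‖ ≤ ‖Real.exp (-s * t)‖ := by
    filter_upwards [ae_restrict_mem measurableSet_Ioi] with t ht
    have h := hrange t ht
    rw [Real.norm_eq_abs, Real.norm_eq_abs, abs_mul, abs_of_pos (Real.exp_pos _),
      abs_of_pos h.1]
    nlinarith [Real.exp_pos (-s*t), h.2]
  have hInt : IntegrableOn (fun t => Real.exp (-s * t) * α t) (Ioi (0:ℝ)) :=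
    Integrable.mono hexpint hmeas hbound
  have hsubIoc : Ioc (0:ℝ) δ ⊆ Ioi 0 := Ioc_subset_Ioi_self
  have hsubIoi : Ioi δ ⊆ Ioi (0:ℝ) := Ioi_subset_Ioi hδpos.le
  set I1 : ℝ := ∫ t in Ioc (0:ℝ) δ, Real.exp (-s*t) * α t with hI1_def
  set I2 : ℝ := ∫ t in Ioi δ, Real.exp (-s*t) * α t with hI2_def
  have hsplit : (∫ t in Ioi (0:ℝ), Real.exp (-s*t) * α t) = I1 + I2 := by
    rw [hI1_def, hI2_def, ← Ioc_union_Ioi_eq_Ioi hδpos.le]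
    exact setIntegral_union (Ioc_disjoint_Ioi le_rfl) measurableSet_Ioi
      (hInt.mono_set hsubIoc) (hInt.mono_set hsubIoi)
  have hE0 : (∫ t in Ioi (0:ℝ), Real.exp (-s*t)) = 1/s := by
    rw [int_exp_Ioi 0 hs]; simp
  have hEδ : (∫ t in Ioi δ, Real.exp (-s*t)) = e/s := int_exp_Ioi δ hs
  have hEIoc : (∫ t in Ioc (0:ℝ) δ, Real.exp (-s*t)) = 1/s - e/s := by
    have h := setIntegral_union (Ioc_disjoint_Ioi (le_refl δ)) measurableSet_Ioi
      (hexpint.mono_set hsubIoc) (hexpint.mono_set hsubIoi)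
    rw [Ioc_union_Ioi_eq_Ioi hδpos.le, hE0, hEδ] at h
    linarith
  have hI2low : 0 ≤ I2 := setIntegral_nonneg measurableSet_Ioi fun t ht =>
    mul_nonneg (Real.exp_pos _).le (hrange t (hsubIoi ht)).1.le
  have hI2up : I2 ≤ e/s := by
    rw [← hEδ]
    exact setIntegral_mono_on (hInt.mono_set hsubIoi) (hexpint.mono_set hsubIoi)
      measurableSet_Ioi fun t ht =>
        mul_le_of_le_one_right (Real.exp_pos _).le (hrange t (hsubIoi ht)).2.le
  have hI1up : I1 ≤ (ᾱ + ε) * (1/s - e/s) := by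
    have h : I1 ≤ ∫ t in Ioc (0:ℝ) δ, (ᾱ + ε) * Real.exp (-s*t) :=
      setIntegral_mono_on (hInt.mono_set hsubIoc)
        ((hexpint.mono_set hsubIoc).const_mul _) measurableSet_Ioc
        fun t ht => by
          have h1 := abs_lt.mp (hαclose t ht)
          nlinarith [Real.exp_pos (-s*t)]
    rwa [integral_const_mul, hEIoc] at h
  have hI1low : (ᾱ - ε) * (1/s - e/s) ≤ I1 := by
    have h : (∫ t in Ioc (0:ℝ) δ, (ᾱ - ε) * Real.exp (-s*t)) ≤ I1 :=
      setIntegral_mono_on ((hexpint.mono_set hsubIoc).const_mul _)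
        (hInt.mono_set hsubIoc) measurableSet_Ioc
        fun t ht => by
          have h1 := abs_lt.mp (hαclose t ht)
          nlinarith [Real.exp_pos (-s*t)]
    rwa [integral_const_mul, hEIoc] at h
  rw [hsplit]
  clear_value ε δ e I1 I2
  have hA : (ᾱ - ε) * (1 - e) ≤ s * I1 := by
    have h := mul_le_mul_of_nonneg_left hI1low hs.le
    calc (ᾱ - ε) * (1 - e) = s * ((ᾱ - ε) * (1/s - e/s)) := by
          field_simp
      _ ≤ s * I1 := h
  have hB : s * I1 ≤ (ᾱ + ε) * (1 - e) := by
    have h := mul_le_mul_of_nonneg_left hI1up hs.le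
    calc s * I1 ≤ s * ((ᾱ + ε) * (1/s - e/s)) := h
      _ = (ᾱ + ε) * (1 - e) := by field_simp
  have hC : s * I2 ≤ e := by
    have h := mul_le_mul_of_nonneg_left hI2up hs.le
    have h2 : s * (e / s) = e := by field_simp
    rw [h2] at h
    exact h
  have hD : 0 ≤ s * I2 := mul_nonneg hs.le hI2low
  clear hI1_def hI2_def he_def hsplit hE0 hEδ hEIoc hInt hexpint hmeas hbound
  clear hαclose hδ' hlim hrange hαm hexp hI1up hI1low hI2up hI2low hε_def hδ_def hse
  constructor
  · nlinarith [mul_nonneg (by linarith : (0:ℝ) ≤ ᾱ - ε) (by linarith : (0:ℝ) ≤ 1/2 - e)]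
  · nlinarith [mul_nonneg he0.le (by linarith : (0:ℝ) ≤ ᾱ + ε)]

theorem scarpi_kernels_vanish_at_infinity
    (α : ℝ → ℝ) (ᾱ : ℝ)
    (hαm : Measurable α)
    (hrange : ∀ t ∈ Ioi (0:ℝ), α t ∈ Ioo (0:ℝ) 1)
    (hᾱ : ᾱ ∈ Ioo (0:ℝ) 1)
    (hlim : Tendsto α (nhdsWithin 0 (Ioi 0)) (nhds ᾱ)) :
    Tendsto (fun s : ℝ =>
        s ^ (s * (∫ t in Ioi (0:ℝ), Real.exp (-s * t) * α t) - 1))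
      atTop (nhds 0) ∧
    Tendsto (fun s : ℝ =>
        s ^ (-(s * (∫ t in Ioi (0:ℝ), Real.exp (-s * t) * α t))))
      atTop (nhds 0) := by
  obtain ⟨c₁, c₂, hc₁, hc₂, hev⟩ := key_bounds α ᾱ hαm hrange hᾱ hlim
  constructor
  · have hg : Tendsto (fun s : ℝ => s ^ (c₂ - 1)) atTop (nhds 0) := by
      have h := tendsto_rpow_neg_atTop (by linarith : (0:ℝ) < 1 - c₂)
      simpa [neg_sub] using h
    refine squeeze_zero' ?_ ?_ hg
    · filter_upwards [eventually_ge_atTop (0:ℝ)] with s hs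
      exact Real.rpow_nonneg hs _
    · filter_upwards [eventually_ge_atTop (1:ℝ), hev] with s hs1 h
      exact Real.rpow_le_rpow_of_exponent_le hs1 (by linarith [h.2])
  · have hg : Tendsto (fun s : ℝ => s ^ (-c₁)) atTop (nhds 0) :=
      tendsto_rpow_neg_atTop hc₁
    refine squeeze_zero' ?_ ?_ hg
    · filter_upwards [eventually_ge_atTop (0:ℝ)] with s hs
      exact Real.rpow_nonneg hs _
    · filter_upwards [eventually_ge_atTop (1:ℝ), hev] with s hs1 h
      exact Real.rpow_le_rpow_of_exponent_le hs1 (by linarith [h.1])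
end
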